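/- arXiv:2007.13062 — 4 statements merged into one kernel-verified Lean document; each statement's English description precedes it below -/
import Mathlib

section
/- Let α, β, λ₁, λ₂ be real numbers with α ≠ 0, and let A : Matrix (Fin 3) (Fin 3) ℝ be the Ricci operator matrix of the Lorentzian Lie group G₁, namely A = ![![-β²/2, -α*β, -α*β], ![-α*β, -(2*α² + β²/2), -2*α²], ![α*β, 2*α², 2*α² - β²/2]]. Then A * η * Aᵀ + λ₁ • (A * η) + λ₂ • η = 0 if and only if β = 0 and λ₁ = 0 and λ₂ = 0. -/
/-!
Write `A = μ • 1 + N` with `μ = -β²/2` and `N = g1Nilpotent (αβ) (2α²)`. Since `Nη` is symmetric,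
the Ein(2) form of `A` expands to `(μ² + λ₁μ + λ₂) η + (2μ + λ₁) Nη + NηNᵀ`, and `NηNᵀ = (αβ)² E`
for a fixed matrix `E`. With `k = 2μ + λ₁`, `p = αβ`, `q = 2α²`, three entries of this matrix give
`μ² + λ₁μ + λ₂ = 0`, `k p = 0` and `k q = p²`; as `q ≠ 0` the last two force `k = p = 0`.
-/

open Matrix

def ein2Form {n R : Type*} [Fintype n] [CommRing R] (l₁ l₂ : R) (η A : Matrix n n R) :
    Matrix n n R :=
  A * η * Aᵀ + l₁ • (A * η) + l₂ • η

theorem ein2Form_smul_one_add {n R : Type*} [Fintype n] [DecidableEq n] [CommRing R]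
    (μ l₁ l₂ : R) (N η : Matrix n n R) (hη : ηᵀ = η) (hNη : (N * η)ᵀ = N * η) :
    ein2Form l₁ l₂ η (μ • 1 + N) =
      (μ ^ 2 + l₁ * μ + l₂) • η + (2 * μ + l₁) • (N * η) + N * η * Nᵀ := by
  have hηN : η * Nᵀ = N * η := by rw [← hNη, transpose_mul, hη]
  simp only [ein2Form, transpose_add, transpose_smul, transpose_one, add_mul, mul_add, smul_mul,
    Matrix.mul_smul, one_mul, mul_one, Matrix.mul_assoc, hηN]
  module

theorem eq_zero_of_mul_eq_zero_of_mul_eq_sq {R : Type*} [CommRing R] [NoZeroDivisors R]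
    {k p q : R} (hq : q ≠ 0) (hkp : k * p = 0) (hkq : k * q = p ^ 2) : p = 0 ∧ k = 0 := by
  have hk : k = 0 := by
    have : k ^ 2 * q = 0 := by linear_combination k * hkq + p * hkp
    simpa [hq] using this
  subst hk
  exact ⟨pow_eq_zero_iff two_ne_zero |>.mp (by simpa using hkq.symm), rfl⟩

section G1

variable {R : Type*} [CommRing R]

def g1Nilpotent (p q : R) : Matrix (Fin 3) (Fin 3) R :=
  !![0, -p, -p; -p, -q, -q; p, q, q]

theorem g1Nilpotent_mul_eta (p q : R) :
    g1Nilpotent p q * diagonal ![1, 1, -1] = !![0, -p, p; -p, -q, q; p, q, -q] := by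
  ext i j; fin_cases i <;> fin_cases j <;> simp [g1Nilpotent]

theorem transpose_g1Nilpotent_mul_eta (p q : R) :
    (g1Nilpotent p q * diagonal ![1, 1, -1])ᵀ = g1Nilpotent p q * diagonal ![1, 1, -1] := by
  rw [g1Nilpotent_mul_eta]
  ext i j; fin_cases i <;> fin_cases j <;> simp

theorem g1Nilpotent_mul_eta_mul_transpose (p q : R) :
    g1Nilpotent p q * diagonal ![1, 1, -1] * (g1Nilpotent p q)ᵀ =
      p ^ 2 • !![0, 0, 0; 0, 1, -1; 0, -1, 1] := by
  rw [g1Nilpotent_mul_eta]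
  ext i j; fin_cases i <;> fin_cases j <;> simp [g1Nilpotent, mul_apply, Fin.sum_univ_three] <;> ring

theorem G1_ricci_eq_smul_one_add_g1Nilpotent (α β : ℝ) :
    !![-β^2/2, -(α*β), -(α*β);
       -(α*β), -(2*α^2 + β^2/2), -(2*α^2);
       α*β, 2*α^2, 2*α^2 - β^2/2] = (-β ^ 2 / 2) • 1 + g1Nilpotent (α * β) (2 * α ^ 2) := by
  ext i j; fin_cases i <;> fin_cases j <;> simp [g1Nilpotent] <;> ring

theorem G1_coeffs_of_eq_zero {c k p q : R}
    (h : c • diagonal ![1, 1, -1] + k • !![0, -p, p; -p, -q, q; p, q, -q] +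
      p ^ 2 • !![0, 0, 0; 0, 1, -1; 0, -1, 1] = 0) :
    c = 0 ∧ k * p = 0 ∧ k * q = p ^ 2 := by
  have h12 : k * q - p ^ 2 = 0 := by simpa [sub_eq_add_neg] using congr_fun₂ h 1 2
  exact ⟨by simpa using congr_fun₂ h 0 0, by simpa using congr_fun₂ h 0 1, sub_eq_zero.mp h12⟩

end G1

/-- The Lorentzian Lie group `G₁` (with Ricci operator matrix `A`) is `Ein(2)`,
i.e. `ρ² + λ₁ρ + λ₂g = 0`, if and only if `β = 0`, `λ₁ = 0` and `λ₂ = 0`. -/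
theorem G1_Ein2 (α β lam1 lam2 : ℝ) (hα : α ≠ 0)
    (η A : Matrix (Fin 3) (Fin 3) ℝ)
    (hη : η = Matrix.diagonal ![1, 1, -1])
    (hA : A = !![-β^2/2, -(α*β), -(α*β);
                 -(α*β), -(2*α^2 + β^2/2), -(2*α^2);
                 α*β, 2*α^2, 2*α^2 - β^2/2]) :
    A * η * Aᵀ + lam1 • (A * η) + lam2 • η = 0 ↔
      (β = 0 ∧ lam1 = 0 ∧ lam2 = 0) := by
  subst hη hA
  change ein2Form lam1 lam2 _ _ = 0 ↔ _
  rw [G1_ricci_eq_smul_one_add_g1Nilpotent, ein2Form_smul_one_add _ _ _ _ _ (diagonal_transpose _)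
    (transpose_g1Nilpotent_mul_eta _ _), g1Nilpotent_mul_eta_mul_transpose, g1Nilpotent_mul_eta]
  constructor
  · intro h
    obtain ⟨hc, hkp, hkq⟩ := G1_coeffs_of_eq_zero h
    obtain ⟨hp, hk⟩ := eq_zero_of_mul_eq_zero_of_mul_eq_sq (by positivity) hkp hkq
    obtain rfl : β = 0 := (mul_eq_zero.mp hp).resolve_left hα
    exact ⟨rfl, by linarith, by simpa using hc⟩
  · rintro ⟨rfl, rfl, rfl⟩
    simp
end

section
/- Let α, β, γ, λ₁, λ₂ be real numbers with γ ≠ 0, and let A : Matrix (Fin 3) (Fin 3) ℝ be the Ricci operator matrix of the Lorentzian Lie group G₂, namely A = ![![-(α²/2 + 2*γ²), 0, 0], ![0, α²/2 - α*β, α*γ - 2*β*γ], ![0, 2*β*γ - α*γ, α²/2 - α*β]]. Then A * η * Aᵀ + λ₁ • (A * η) + λ₂ • η = 0 if and only if α = 2*β and λ₁ = α²/2 + 2*γ² and λ₂ = 0. -/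
/-!
The Ricci operator is `(a) ⊕ [[p, q], [-q, p]]` with `a = -(α²/2 + 2γ²)`, `p = α²/2 - αβ` and
`q = γ(α - 2β)`, so the Ein(2) equation reduces to `a² + λ₁a + λ₂ = 0`,
`p² - q² + λ₁p + λ₂ = 0` and `q(2p + λ₁) = 0`. If `q ≠ 0` the last two give `λ₁ = -2p` and
`λ₂ = p² + q²`, and then the first reads `(a - p)² + q² = 0`, which is impossible. Hence `q = 0`,
i.e. `α = 2β` since `γ ≠ 0`; then `p = 0`, so `λ₂ = 0`, and `a ≠ 0` gives `λ₁ = -a`.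
-/

open Matrix

variable {n R : Type*} [Fintype n] [CommRing R]

/-- The matrix of `ρ² + λ₁ρ + λ₂g` when `A` is the matrix of `ρ⁰` and `η` the one of `g`. -/
def ein2Tensor (η A : Matrix n n R) (l1 l2 : R) : Matrix n n R :=
  A * η * Aᵀ + l1 • (A * η) + l2 • η

theorem ein2Tensor_block (a p q l1 l2 : R) :
    ein2Tensor (diagonal ![1, 1, -1]) !![a, 0, 0; 0, p, q; 0, -q, p] l1 l2 =
      !![a ^ 2 + l1 * a + l2, 0, 0;
        0, p ^ 2 - q ^ 2 + l1 * p + l2, -(q * (2 * p + l1));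
        0, -(q * (2 * p + l1)), -(p ^ 2 - q ^ 2 + l1 * p + l2)] := by
  rw [ein2Tensor, diagonal_vec3]
  ext i j
  fin_cases i <;> fin_cases j <;> simp [vecHead, vecTail, vecMul_transpose] <;> ring

theorem ein2Tensor_block_eq_zero_iff (a p q l1 l2 : R) :
    ein2Tensor (diagonal ![1, 1, -1]) !![a, 0, 0; 0, p, q; 0, -q, p] l1 l2 = 0 ↔
      a ^ 2 + l1 * a + l2 = 0 ∧ p ^ 2 - q ^ 2 + l1 * p + l2 = 0 ∧ q * (2 * p + l1) = 0 := by
  rw [ein2Tensor_block, ← ext_iff]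
  simp [Fin.forall_fin_succ, -mul_eq_zero, -neg_add_rev, -neg_sub, and_comm]

theorem eq_zero_of_ein2_block_equations {K : Type*} [Field K] [LinearOrder K]
    [IsStrictOrderedRing K] {a p q l1 l2 : K} (h₀ : a ^ 2 + l1 * a + l2 = 0)
    (h₁ : p ^ 2 - q ^ 2 + l1 * p + l2 = 0) (h₂ : q * (2 * p + l1) = 0) : q = 0 := by
  by_contra hq
  have hl1 : l1 = -2 * p := by
    linarith [(mul_eq_zero.mp h₂).resolve_left hq]
  have hsq : (a - p) ^ 2 + q ^ 2 = 0 := by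
    linear_combination h₀ - h₁ - (a - p) * hl1
  have hpos : 0 < (a - p) ^ 2 + q ^ 2 := by positivity
  exact hpos.ne' hsq

/-- The Lorentzian Lie group `G₂` (with Ricci operator matrix `A`) is `Ein(2)`
if and only if `α = 2β`, `λ₁ = α²/2 + 2γ²` and `λ₂ = 0`. -/
theorem G2_Ein2 (α β γ lam1 lam2 : ℝ) (hγ : γ ≠ 0)
    (η A : Matrix (Fin 3) (Fin 3) ℝ)
    (hη : η = Matrix.diagonal ![1, 1, -1])
    (hA : A = !![-(α^2/2 + 2*γ^2), 0, 0;
                 0, α^2/2 - α*β, α*γ - 2*β*γ;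
                 0, 2*β*γ - α*γ, α^2/2 - α*β]) :
    A * η * Aᵀ + lam1 • (A * η) + lam2 • η = 0 ↔
      (α = 2*β ∧ lam1 = α^2/2 + 2*γ^2 ∧ lam2 = 0) := by
  have hA' : A = !![-(α ^ 2 / 2 + 2 * γ ^ 2), 0, 0; 0, α ^ 2 / 2 - α * β, γ * (α - 2 * β);
      0, -(γ * (α - 2 * β)), α ^ 2 / 2 - α * β] := by
    rw [hA]; congr <;> ring
  change ein2Tensor η A lam1 lam2 = 0 ↔ _
  rw [hη, hA', ein2Tensor_block_eq_zero_iff]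
  constructor
  · rintro ⟨h₀, h₁, h₂⟩
    have hβ : β = α / 2 := by
      have := (mul_eq_zero.mp (eq_zero_of_ein2_block_equations h₀ h₁ h₂)).resolve_left hγ
      linarith
    subst hβ
    have hlam2 : lam2 = 0 := by linear_combination h₁
    have ha : α ^ 2 / 2 + 2 * γ ^ 2 ≠ 0 := by positivity
    have hlam1 : lam1 = α ^ 2 / 2 + 2 * γ ^ 2 :=
      mul_left_cancel₀ ha (by linear_combination -h₀ + hlam2)
    exact ⟨by ring, hlam1, hlam2⟩
  · rintro ⟨rfl, rfl, rfl⟩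
    exact ⟨by ring, by ring, by ring⟩
end

section
/- Let α, β be real numbers. On ℝ³ with standard basis e₁, e₂, e₃, let the bracket be the bilinear antisymmetric map determined by [e₁,e₂] = α•e₁ - β•e₃, [e₁,e₃] = -α•e₁ - β•e₂, [e₂,e₃] = β•e₁ + α•e₂ + α•e₃ (the Lie algebra of G₁), and let ∇ be the bilinear map ℝ³ → ℝ³ → ℝ³ determined on basis vectors by ∇_{e₁}e₁ = -α•e₂ - α•e₃, ∇_{e₂}e₁ = (β/2)•e₃, ∇_{e₃}e₁ = (β/2)•e₂, ∇_{e₁}e₂ = α•e₁ - (β/2)•e₃, ∇_{e₂}e₂ = α•e₃, ∇_{e₃}e₂ = -(β/2)•e₁ - α•e₃, ∇_{e₁}e₃ = -α•e₁ - (β/2)•e₂, ∇_{e₂}e₃ = (β/2)•e₁ + α•e₂, ∇_{e₃}e₃ = -α•e₂. Then for all X, Y, Z ∈ ℝ³, 2*g(∇_X Y, Z) = g([X,Y], Z) - g([Y,Z], X) + g([Z,X], Y), i.e. ∇ satisfies the Koszul formula characterizing the Levi-Civita connection of the left-invariant Lorentzian metric g. -/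
noncomputable section

/-- The standard basis of `ℝ³`. -/
def e₁ : Fin 3 → ℝ := ![1, 0, 0]
def e₂ : Fin 3 → ℝ := ![0, 1, 0]
def e₃ : Fin 3 → ℝ := ![0, 0, 1]

/-- The Lorentzian inner product with `e₁, e₂, e₃` pseudo-orthonormal, `e₃` timelike. -/
def g (X Y : Fin 3 → ℝ) : ℝ := X 0 * Y 0 + X 1 * Y 1 - X 2 * Y 2

/-- The bilinear antisymmetric bracket of the Lie algebra of `G₁`:
`[e₁,e₂] = αe₁ - βe₃`, `[e₁,e₃] = -αe₁ - βe₂`, `[e₂,e₃] = βe₁ + αe₂ + αe₃`. -/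
def bracket (α β : ℝ) (X Y : Fin 3 → ℝ) : Fin 3 → ℝ :=
  (X 0 * Y 1 - X 1 * Y 0) • (α • e₁ - β • e₃) +
  (X 0 * Y 2 - X 2 * Y 0) • (-α • e₁ - β • e₂) +
  (X 1 * Y 2 - X 2 * Y 1) • (β • e₁ + α • e₂ + α • e₃)

/-- The candidate Levi-Civita connection of `G₁`, extended bilinearly from its
values on the basis vectors. -/
def nabla (α β : ℝ) (X Y : Fin 3 → ℝ) : Fin 3 → ℝ :=
  (X 0 * Y 0) • (-α • e₂ - α • e₃) +
  (X 0 * Y 1) • (α • e₁ - (β/2) • e₃) +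
  (X 0 * Y 2) • (-α • e₁ - (β/2) • e₂) +
  (X 1 * Y 0) • ((β/2) • e₃) +
  (X 1 * Y 1) • (α • e₃) +
  (X 1 * Y 2) • ((β/2) • e₁ + α • e₂) +
  (X 2 * Y 0) • ((β/2) • e₂) +
  (X 2 * Y 1) • (-(β/2) • e₁ - α • e₃) +
  (X 2 * Y 2) • (-α • e₂)

/-!
The Koszul formula is the standard consequence of the two properties characterizing the Levi-Civita
connection: torsion-freeness, `∇_X Y - ∇_Y X = [X, Y]`, and metric compatibility, which for
left-invariant fields (whose inner products are constant) says that every `∇_X` is skew-adjoint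
for `g`.
-/

theorem LinearMap.BilinForm.IsSymm.koszul_formula {R M : Type*} [CommRing R] [AddCommGroup M]
    [Module R M] {B : LinearMap.BilinForm R M} (hB : B.IsSymm) {nabla bracket : M → M → M}
    (torsion_free : ∀ X Y, nabla X Y - nabla Y X = bracket X Y)
    (metric : ∀ X, B.IsSkewAdjoint (nabla X)) (X Y Z : M) :
    2 * B (nabla X Y) Z = B (bracket X Y) Z - B (bracket Y Z) X + B (bracket Z X) Y := by
  have skew : ∀ X Y Z, B (nabla X Z) Y = -B (nabla X Y) Z := fun X Y Z => by
    rw [metric X Z Y, hB.eq, Pi.neg_apply, map_neg, LinearMap.neg_apply]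
  simp only [← torsion_free, map_sub, LinearMap.sub_apply]
  rw [skew X Y Z, skew Y X Z, skew Z Y X]
  ring

def lorentzForm : LinearMap.BilinForm ℝ (Fin 3 → ℝ) := (Matrix.diagonal ![1, 1, -1]).toBilin'

theorem lorentzForm_apply (X Y : Fin 3 → ℝ) : lorentzForm X Y = g X Y := by
  simp only [lorentzForm, Matrix.toBilin'_apply', Matrix.mulVec_diagonal, dotProduct,
    Fin.sum_univ_three, g, Matrix.cons_val_zero, Matrix.cons_val_one, Matrix.cons_val_two,
    Matrix.head_cons, Matrix.tail_cons]
  ring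

theorem lorentzForm_isSymm : lorentzForm.IsSymm :=
  Matrix.isSymm_toBilin'_iff_isSymm.mpr (Matrix.isSymm_diagonal _)

section G1

variable (α β : ℝ)

theorem nabla_sub_nabla_eq_bracket (X Y : Fin 3 → ℝ) :
    nabla α β X Y - nabla α β Y X = bracket α β X Y := by
  ext i
  fin_cases i <;>
  simp only [nabla, bracket, e₁, e₂, e₃, Pi.add_apply, Pi.sub_apply, Pi.smul_apply, smul_eq_mul,
    Fin.zero_eta, Fin.mk_one, Fin.reduceFinMk, Matrix.cons_val_zero, Matrix.cons_val_one,
    Matrix.cons_val_two, Matrix.head_cons, Matrix.tail_cons] <;>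
  ring

theorem isSkewAdjoint_nabla (X : Fin 3 → ℝ) : lorentzForm.IsSkewAdjoint (nabla α β X) := by
  intro Y Z
  simp only [lorentzForm_apply, g, nabla, e₁, e₂, e₃, Pi.add_apply, Pi.sub_apply, Pi.smul_apply,
    Pi.neg_apply, smul_eq_mul, Matrix.cons_val_zero, Matrix.cons_val_one, Matrix.cons_val_two,
    Matrix.head_cons, Matrix.tail_cons]
  ring

end G1

/-- `∇` satisfies the Koszul formula characterizing the Levi-Civita connection
of the left-invariant Lorentzian metric `g` on `G₁`. -/
theorem G1_LeviCivita_Koszul (α β : ℝ) (X Y Z : Fin 3 → ℝ) :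
    2 * g (nabla α β X Y) Z =
      g (bracket α β X Y) Z - g (bracket α β Y Z) X + g (bracket α β Z X) Y := by
  simpa only [lorentzForm_apply] using lorentzForm_isSymm.koszul_formula
    (nabla_sub_nabla_eq_bracket α β) (isSkewAdjoint_nabla α β) X Y Z

end
end

section
/- Let α, β be real numbers. On ℝ³ with standard basis e₁, e₂, e₃, let the bracket be the bilinear antisymmetric map determined by [e₁,e₂] = α•e₁ - β•e₃, [e₁,e₃] = -α•e₁ - β•e₂, [e₂,e₃] = β•e₁ + α•e₂ + α•e₃ (the Lie algebra of G₁), let ∇ be the bilinear map ℝ³ → ℝ³ → ℝ³ determined on basis vectors by ∇_{e₁}e₁ = -α•e₂ - α•e₃, ∇_{e₂}e₁ = (β/2)•e₃, ∇_{e₃}e₁ = (β/2)•e₂, ∇_{e₁}e₂ = α•e₁ - (β/2)•e₃, ∇_{e₂}e₂ = α•e₃, ∇_{e₃}e₂ = -(β/2)•e₁ - α•e₃, ∇_{e₁}e₃ = -α•e₁ - (β/2)•e₂, ∇_{e₂}e₃ = (β/2)•e₁ + α•e₂, ∇_{e₃}e₃ = -α•e₂ (the Levi-Civita connection of G₁),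 and define R(X,Y)Z = ∇_X(∇_Y Z) - ∇_Y(∇_X Z) - ∇_{[X,Y]}Z and ρ(X,Y) = -g(R(X,e₁)Y, e₁) - g(R(X,e₂)Y, e₂) + g(R(X,e₃)Y, e₃). Then ρ(e₁,e₁) = -β²/2, ρ(e₁,e₂) = -α*β, ρ(e₁,e₃) = α*β, ρ(e₂,e₂) = -2*α² - β²/2, ρ(e₂,e₃) = 2*α², and ρ(e₃,e₃) = -2*α² + β²/2; equivalently, the Ricci operator ρ⁰ defined by ρ(X,Y) = g(ρ⁰(X),Y) satisfies ρ⁰(e₁) = -(β²/2)•e₁ - (α*β)•e₂ - (α*β)•e₃, ρ⁰(e₂) = -(α*β)•e₁ - (2*α² + β²/2)•e₂ - (2*α²)•e₃, ρ⁰(e₃) = (α*β)•e₁ + (2*α²)•e₂ + (2*α² - β²/2)•e₃. -/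
noncomputable section

/-- Curvature tensor `R(X,Y)Z = ∇_X∇_Y Z - ∇_Y∇_X Z - ∇_[X,Y] Z` of `G₁`. -/
def R (α β : ℝ) (X Y Z : Fin 3 → ℝ) : Fin 3 → ℝ :=
  nabla α β X (nabla α β Y Z) - nabla α β Y (nabla α β X Z) -
    nabla α β (bracket α β X Y) Z

/-- Ricci tensor `ρ(X,Y) = -g(R(X,e₁)Y,e₁) - g(R(X,e₂)Y,e₂) + g(R(X,e₃)Y,e₃)` of `G₁`. -/
def ρ (α β : ℝ) (X Y : Fin 3 → ℝ) : ℝ :=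
  - g (R α β X e₁ Y) e₁ - g (R α β X e₂ Y) e₂ + g (R α β X e₃ Y) e₃

def ricciOperator (α β : ℝ) (X : Fin 3 → ℝ) : Fin 3 → ℝ :=
  X 0 • (-(β^2/2) • e₁ - (α*β) • e₂ - (α*β) • e₃) +
  X 1 • (-(α*β) • e₁ - (2*α^2 + β^2/2) • e₂ - (2*α^2) • e₃) +
  X 2 • ((α*β) • e₁ + (2*α^2) • e₂ + (2*α^2 - β^2/2) • e₃)

lemma g_e₁ (v : Fin 3 → ℝ) : g v e₁ = v 0 := by simp [g, e₁]

lemma g_e₂ (v : Fin 3 → ℝ) : g v e₂ = v 1 := by simp [g, e₂]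

lemma g_e₃ (v : Fin 3 → ℝ) : g v e₃ = -v 2 := by simp [g, e₃]

lemma ricciOperator_e₁ (α β : ℝ) :
    ricciOperator α β e₁ = -(β^2/2) • e₁ - (α*β) • e₂ - (α*β) • e₃ := by
  simp [ricciOperator, e₁]

lemma ricciOperator_e₂ (α β : ℝ) :
    ricciOperator α β e₂ = -(α*β) • e₁ - (2*α^2 + β^2/2) • e₂ - (2*α^2) • e₃ := by
  simp [ricciOperator, e₂]

lemma ricciOperator_e₃ (α β : ℝ) :
    ricciOperator α β e₃ = (α*β) • e₁ + (2*α^2) • e₂ + (2*α^2 - β^2/2) • e₃ := by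
  simp [ricciOperator, e₃]

theorem ρ_eq_g_ricciOperator (α β : ℝ) (X Y : Fin 3 → ℝ) :
    ρ α β X Y = g (ricciOperator α β X) Y := by
  simp only [ρ, R, nabla, bracket, ricciOperator, g, e₁, e₂, e₃,
    Pi.sub_apply, Pi.add_apply, Pi.smul_apply, smul_eq_mul, Matrix.cons_val_zero,
    Matrix.cons_val_one, Matrix.cons_val_two, Matrix.head_cons, Matrix.tail_cons]
  ring

/-- The Ricci tensor of `G₁` (formula (2.8) of the paper): its values on the basis,
and equivalently the Ricci operator `ρ⁰` characterized by `ρ(X,Y) = g(ρ⁰X, Y)`. -/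
theorem G1_Ricci (α β : ℝ) :
    (ρ α β e₁ e₁ = -β^2/2 ∧ ρ α β e₁ e₂ = -(α*β) ∧ ρ α β e₁ e₃ = α*β ∧
     ρ α β e₂ e₂ = -2*α^2 - β^2/2 ∧ ρ α β e₂ e₃ = 2*α^2 ∧
     ρ α β e₃ e₃ = -2*α^2 + β^2/2) ∧
    ((∀ Y, ρ α β e₁ Y = g (-(β^2/2) • e₁ - (α*β) • e₂ - (α*β) • e₃) Y) ∧
     (∀ Y, ρ α β e₂ Y = g (-(α*β) • e₁ - (2*α^2 + β^2/2) • e₂ - (2*α^2) • e₃) Y) ∧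
     (∀ Y, ρ α β e₃ Y = g ((α*β) • e₁ + (2*α^2) • e₂ + (2*α^2 - β^2/2) • e₃) Y)) := by
  simp only [ρ_eq_g_ricciOperator, ricciOperator_e₁, ricciOperator_e₂, ricciOperator_e₃,
    implies_true, and_true, g_e₁, g_e₂, g_e₃]
  simp [e₁, e₂, e₃]
  exact ⟨by ring, by ring, by ring⟩

end
end
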